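/- There is exactly one quadruple (n, c, d, i) satisfying the Arieli–Avron–Zamansky non-deterministic truth tables whose induced logical equivalence relation satisfies, for all formulas A, B, C, all twelve laws (1) A ∧ F ≡ F; (2) A ∨ T ≡ T; (3) A ∧ T ≡ A; (4) A ∨ F ≡ A; (5) A ∧ A ≡ A; (6) A ∨ A ≡ A; (7) A ∧ B ≡ B ∧ A; (8) A ∨ B ≡ B ∨ A; (9) ¬¬A ≡ A; (10) (A ∨ ¬A) → B ≡ B; (11) (A → B) ∧ (A → C) ≡ A → (B ∧ C); (12) (A → C) ∧ (B → C) ≡ (A ∨ B) → C (with T := ¬F); namely the quadruple of LP^{→,F}. -/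
import Mathlib


/-- The three truth values: true, false, both-true-and-false. -/
inductive TV : Type
  | t : TV
  | f : TV
  | b : TV
  deriving DecidableEq

/-- Formulas of LP^{→,F}: propositional variables, falsity constant,
    negation, conjunction, disjunction, implication. -/
inductive Fm : Type
  | var : ℕ → Fm
  | fls : Fm
  | neg : Fm → Fm
  | conj : Fm → Fm → Fm
  | disj : Fm → Fm → Fm
  | impl : Fm → Fm → Fm
  deriving DecidableEq

/-- The LP^{→,F} negation truth function. -/
def TV.negLP : TV → TV
  | .t => .f
  | .f => .t
  | .b => .b

/-- The LP^{→,F} conjunction truth function. -/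
def TV.andLP : TV → TV → TV
  | .f, _ => .f
  | _, .f => .f
  | .t, .t => .t
  | _, _ => .b

/-- The LP^{→,F} disjunction truth function. -/
def TV.orLP : TV → TV → TV
  | .t, _ => .t
  | _, .t => .t
  | .f, .f => .f
  | _, _ => .b

/-- The LP^{→,F} implication truth function: t if the antecedent is f,
    otherwise the value of the consequent. -/
def TV.implLP : TV → TV → TV
  | .f, _ => .t
  | _, y => y

/-- A valuation for LP^{→,F}. -/
def IsValuation (ν : Fm → TV) : Prop :=
  ν .fls = .f ∧
  (∀ A, ν (.neg A) = (ν A).negLP) ∧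
  (∀ A B, ν (.conj A B) = (ν A).andLP (ν B)) ∧
  (∀ A B, ν (.disj A B) = (ν A).orLP (ν B)) ∧
  (∀ A B, ν (.impl A B) = (ν A).implLP (ν B))

/-- Logical equivalence in LP^{→,F}. -/
def LEquiv (A B : Fm) : Prop := ∀ ν : Fm → TV, IsValuation ν → ν A = ν B

/-- The truth constant T, an abbreviation for ¬F. -/
def Fm.tru : Fm := .neg .fls

/-- A truth value is designated iff it is t or ⊤. -/
def Designated (v : TV) : Prop := v = .t ∨ v = .b

/-- Semantic logical consequence in LP^{→,F}. -/
def LPCons (Γ : Set Fm) (A : Fm) : Prop :=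
  ∀ ν : Fm → TV, IsValuation ν → ((∃ B ∈ Γ, ν B = .f) ∨ Designated (ν A))

/-- Validity in LP^{→,F}. -/
def LPValid (A : Fm) : Prop := ∀ ν : Fm → TV, IsValuation ν → Designated (ν A)

/-- A quadruple of truth functions on the three truth values. -/
structure Quad : Type where
  n : TV → TV
  c : TV → TV → TV
  d : TV → TV → TV
  i : TV → TV → TV

/-- The Arieli–Avron–Zamansky non-deterministic truth tables. -/
def AAZ (q : Quad) : Prop :=
  q.n .t = .f ∧ q.n .f = .t ∧ (q.n .b = .t ∨ q.n .b = .b) ∧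
  (∀ y, q.c .f y = .f) ∧ (∀ x, q.c x .f = .f) ∧ q.c .t .t = .t ∧
  (q.c .t .b = .t ∨ q.c .t .b = .b) ∧
  (q.c .b .t = .t ∨ q.c .b .t = .b) ∧
  (q.c .b .b = .t ∨ q.c .b .b = .b) ∧
  q.d .f .f = .f ∧ q.d .t .t = .t ∧ q.d .t .f = .t ∧ q.d .f .t = .t ∧
  (q.d .t .b = .t ∨ q.d .t .b = .b) ∧
  (q.d .b .t = .t ∨ q.d .b .t = .b) ∧
  (q.d .b .b = .t ∨ q.d .b .b = .b) ∧
  (q.d .b .f = .t ∨ q.d .b .f = .b) ∧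
  (q.d .f .b = .t ∨ q.d .f .b = .b) ∧
  q.i .t .f = .f ∧ q.i .b .f = .f ∧
  q.i .f .f = .t ∧ q.i .f .t = .t ∧ q.i .t .t = .t ∧
  (q.i .f .b = .t ∨ q.i .f .b = .b) ∧
  (q.i .t .b = .t ∨ q.i .t .b = .b) ∧
  (q.i .b .t = .t ∨ q.i .b .t = .b) ∧
  (q.i .b .b = .t ∨ q.i .b .b = .b)

/-- A valuation for the logic induced by the quadruple `q`. -/
def IsValuationQ (q : Quad) (ν : Fm → TV) : Prop :=
  ν .fls = .f ∧
  (∀ A, ν (.neg A) = q.n (ν A)) ∧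
  (∀ A B, ν (.conj A B) = q.c (ν A) (ν B)) ∧
  (∀ A B, ν (.disj A B) = q.d (ν A) (ν B)) ∧
  (∀ A B, ν (.impl A B) = q.i (ν A) (ν B))

/-- Logical equivalence in the logic induced by the quadruple `q`. -/
def LEquivQ (q : Quad) (A B : Fm) : Prop :=
  ∀ ν : Fm → TV, IsValuationQ q ν → ν A = ν B

/-- The quadruple of LP^{→,F}. -/
def lpQuad : Quad := ⟨TV.negLP, TV.andLP, TV.orLP, TV.implLP⟩

/-- Laws (1)–(12) for the logic induced by a quadruple. -/
def Laws12 (q : Quad) : Prop :=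
  ∀ A B C : Fm,
    LEquivQ q (A.conj .fls) .fls ∧
    LEquivQ q (A.disj Fm.tru) Fm.tru ∧
    LEquivQ q (A.conj Fm.tru) A ∧
    LEquivQ q (A.disj .fls) A ∧
    LEquivQ q (A.conj A) A ∧
    LEquivQ q (A.disj A) A ∧
    LEquivQ q (A.conj B) (B.conj A) ∧
    LEquivQ q (A.disj B) (B.disj A) ∧
    LEquivQ q A.neg.neg A ∧
    LEquivQ q ((A.disj A.neg).impl B) B ∧
    LEquivQ q ((A.impl B).conj (A.impl C)) (A.impl (B.conj C)) ∧
    LEquivQ q ((A.impl C).conj (B.impl C)) ((A.disj B).impl C)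

/-- Evaluation of formulas under a variable assignment, for quadruple `q`. -/
def evalQ (q : Quad) (sig : ℕ → TV) : Fm → TV
  | .var k => sig k
  | .fls => .f
  | .neg A => q.n (evalQ q sig A)
  | .conj A B => q.c (evalQ q sig A) (evalQ q sig B)
  | .disj A B => q.d (evalQ q sig A) (evalQ q sig B)
  | .impl A B => q.i (evalQ q sig A) (evalQ q sig B)

lemma evalQ_isVal (q : Quad) (sig : ℕ → TV) : IsValuationQ q (evalQ q sig) :=
  ⟨rfl, fun _ => rfl, fun _ _ => rfl, fun _ _ => rfl, fun _ _ => rfl⟩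

/-- Helper assignment. -/
def sig3 (x y z : TV) : ℕ → TV
  | 0 => x
  | 1 => y
  | _ => z

/-- Exactly one quadruple satisfying the AAZ non-deterministic truth tables
    induces a logical equivalence relation satisfying laws (1)–(12):
    the quadruple of LP^{→,F}. -/
theorem unique_quad_laws_1_to_12 :
    ∀ q : Quad, (AAZ q ∧ Laws12 q) ↔ q = lpQuad := by
  intro q
  constructor
  · rintro ⟨h, hl⟩
    obtain ⟨hnt, hnf, hnb, hcf, hcf', hctt, hctb, hcbt, hcbb, hdff, hdtt, hdtf, hdft,
      hdtb, hdbt, hdbb, hdbf, hdfb, hitf, hibf, hiff, hift, hitt, hifb, hitb, hibt, hibb⟩ := h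
    obtain ⟨l1, l2, l3, l4, l5, l6, l7, l8, l9, l10, l11, l12⟩ := hl (.var 0) (.var 1) (.var 2)
    -- negation
    have e_nb : q.n .b = .b := by
      have h9 : q.n (q.n .b) = .b := l9 _ (evalQ_isVal q (sig3 .b .t .t))
      rcases hnb with h | h
      · rw [h, hnt] at h9; cases h9
      · exact h
    -- conjunction
    have e_cbt : q.c .b .t = .b := by
      have h3 : q.c .b (q.n .f) = .b := l3 _ (evalQ_isVal q (sig3 .b .t .t))
      rwa [hnf] at h3
    have e_ctb : q.c .t .b = .b := by
      have h7 : q.c .t .b = q.c .b .t := l7 _ (evalQ_isVal q (sig3 .t .b .t))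
      rw [h7, e_cbt]
    have e_cbb : q.c .b .b = .b := l5 _ (evalQ_isVal q (sig3 .b .t .t))
    -- disjunction
    have e_dbf : q.d .b .f = .b := l4 _ (evalQ_isVal q (sig3 .b .t .t))
    have e_dfb : q.d .f .b = .b := by
      have h8 : q.d .f .b = q.d .b .f := l8 _ (evalQ_isVal q (sig3 .f .b .t))
      rw [h8, e_dbf]
    have e_dbb : q.d .b .b = .b := l6 _ (evalQ_isVal q (sig3 .b .t .t))
    have e_dbt : q.d .b .t = .t := by
      have h2 : q.d .b (q.n .f) = q.n .f := l2 _ (evalQ_isVal q (sig3 .b .t .t))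
      rwa [hnf] at h2
    have e_dtb : q.d .t .b = .t := by
      have h8 : q.d .t .b = q.d .b .t := l8 _ (evalQ_isVal q (sig3 .t .b .t))
      rw [h8, e_dbt]
    -- implication
    have e_ibt : q.i .b .t = .t := by
      have h10 : q.i (q.d .b (q.n .b)) .t = .t := l10 _ (evalQ_isVal q (sig3 .b .t .t))
      rwa [e_nb, e_dbb] at h10
    have e_ibb : q.i .b .b = .b := by
      have h10 : q.i (q.d .b (q.n .b)) .b = .b := l10 _ (evalQ_isVal q (sig3 .b .b .t))
      rwa [e_nb, e_dbb] at h10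
    have e_itb : q.i .t .b = .b := by
      have h12 : q.c (q.i .t .b) (q.i .b .b) = q.i (q.d .t .b) .b :=
        l12 _ (evalQ_isVal q (sig3 .t .b .b))
      rw [e_ibb, e_dtb] at h12
      rcases hitb with h | h
      · rw [h, e_ctb] at h12; cases h12
      · exact h
    have e_ifb : q.i .f .b = .t := by
      have h11 : q.c (q.i .f .b) (q.i .f .f) = q.i .f (q.c .b .f) :=
        l11 _ (evalQ_isVal q (sig3 .f .b .f))
      rw [hiff, hcf' .b, hiff] at h11
      rcases hifb with h | h
      · exact h
      · rw [h, e_cbt] at h11; cases h11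
    -- conclude
    have hn : q.n = TV.negLP := funext fun x => by
      cases x
      · exact hnt
      · exact hnf
      · exact e_nb
    have hc : q.c = TV.andLP := funext fun x => funext fun y => by
      cases x <;> cases y <;>
        first
          | exact hcf _
          | exact hcf' _
          | exact hctt
          | exact e_ctb
          | exact e_cbt
          | exact e_cbb
    have hd : q.d = TV.orLP := funext fun x => funext fun y => by
      cases x <;> cases y <;>
        first
          | exact hdtt
          | exact hdtf
          | exact e_dtb
          | exact hdft
          | exact hdff
          | exact e_dfb
          | exact e_dbt
          | exact e_dbf
          | exact e_dbb
    have hi : q.i = TV.implLP := funext fun x => funext fun y => by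
      cases x <;> cases y <;>
        first
          | exact hitt
          | exact hitf
          | exact e_itb
          | exact hift
          | exact hiff
          | exact e_ifb
          | exact e_ibt
          | exact hibf
          | exact e_ibb
    calc q = ⟨q.n, q.c, q.d, q.i⟩ := rfl
      _ = lpQuad := by rw [hn, hc, hd, hi]; rfl
  · rintro rfl
    refine ⟨⟨rfl, rfl, Or.inr rfl, fun y => by cases y <;> rfl, fun x => by cases x <;> rfl, rfl,
      Or.inr rfl, Or.inr rfl, Or.inr rfl,
      rfl, rfl, rfl, rfl,
      Or.inl rfl, Or.inl rfl, Or.inr rfl, Or.inr rfl, Or.inr rfl,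
      rfl, rfl, rfl, rfl, rfl,
      Or.inl rfl, Or.inr rfl, Or.inl rfl, Or.inr rfl⟩, ?_⟩
    intro A B C
    refine ⟨?_, ?_, ?_, ?_, ?_, ?_, ?_, ?_, ?_, ?_, ?_, ?_⟩ <;>
      (intro v hv
       obtain ⟨hf, hn, hc, hd, hi⟩ := hv
       simp only [Fm.tru, hn, hc, hd, hi, hf]
       cases v A <;> cases v B <;> cases v C <;> rfl)
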